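/- For all n ≥ 1, ∑_{σ ∈ S_{n+1}, σ(n+1)=1} q^{cr(σ)} = F_n(q) and ∑_{σ ∈ S_{n+1}, σ(n)=1} q^{cr(σ)} = q·F_n(q) + (1−q)·F_{n−1}(q), where F_m(q) = ∑_{σ ∈ S_m} q^{cr(σ)}. -/

import Mathlib

open Finset Polynomial

/-- A crossing of a permutation of [n] (0-based encoding of the 1-based definition):
`i < j < σ(i) < σ(j)` or `σ(i) < σ(j) ≤ i < j` (1-based). -/
def IsCross {n : ℕ} (σ : Equiv.Perm (Fin n)) (i j : Fin n) : Prop :=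
  (i < j ∧ (j : ℕ) < (σ i : ℕ) ∧ σ i < σ j) ∨
  (σ i < σ j ∧ (σ j : ℕ) ≤ (i : ℕ) ∧ i < j)

instance {n : ℕ} (σ : Equiv.Perm (Fin n)) (i j : Fin n) : Decidable (IsCross σ i j) := by
  unfold IsCross; infer_instance

/-- the number of crossings -/
def cr {n : ℕ} (σ : Equiv.Perm (Fin n)) : ℕ :=
  (Finset.univ.filter (fun p : Fin n × Fin n => IsCross σ p.1 p.2)).card

/-- occurrence of a length-3 pattern -/
def Contains3 {n : ℕ} (σ : Equiv.Perm (Fin n)) (τ : Fin 3 → Fin 3) : Prop :=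
  ∃ i j l : Fin n, i < j ∧ j < l ∧
    (τ 0 < τ 1 ↔ σ i < σ j) ∧ (τ 0 < τ 2 ↔ σ i < σ l) ∧ (τ 1 < τ 2 ↔ σ j < σ l)

instance {n : ℕ} (σ : Equiv.Perm (Fin n)) (τ : Fin 3 → Fin 3) :
    Decidable (Contains3 σ τ) := by
  unfold Contains3; infer_instance

def Avoids {n : ℕ} (σ : Equiv.Perm (Fin n)) (τ : Fin 3 → Fin 3) : Prop := ¬ Contains3 σ τ

instance {n : ℕ} (σ : Equiv.Perm (Fin n)) (τ : Fin 3 → Fin 3) : Decidable (Avoids σ τ) := by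
  unfold Avoids; infer_instance

def p123 : Fin 3 → Fin 3 := ![0, 1, 2]
def p132 : Fin 3 → Fin 3 := ![0, 2, 1]
def p213 : Fin 3 → Fin 3 := ![1, 0, 2]
def p231 : Fin 3 → Fin 3 := ![1, 2, 0]
def p312 : Fin 3 → Fin 3 := ![2, 0, 1]
def p321 : Fin 3 → Fin 3 := ![2, 1, 0]

/-! Deleting the position `P` and the value `V` identifies `{σ ∈ S_{m+1} | σ P = V}` with
`S_m`. For `V = 0` and `P` one of the last two positions, the crossings of `σ` avoiding `P` are
the crossings of `τ⁻¹` relabelled by `τ`, where `τ` is the reduced permutation. At the last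
position nothing else crosses; at the second-to-last position the only other crossing is
`(P, P + 1)`, present exactly when `τ` moves its last point. Inversion permutes `S_m`, so summing
`q ^ cr` gives `F n`, respectively `q F n + (1 - q) F (n - 1)`, the last term counting the `τ`
that fix their last point, whose crossings are those of their restriction. -/

open Equiv

def insertPerm {m : ℕ} (P V : Fin (m + 1)) (τ : Perm (Fin m)) : Perm (Fin (m + 1)) :=
  (equivCongr (finSuccEquiv' P) (finSuccEquiv' V)).symm τ.optionCongr

section insertPerm

variable {m : ℕ} (P V : Fin (m + 1)) (τ : Perm (Fin m))

@[simp] lemma insertPerm_apply_self : insertPerm P V τ P = V := by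
  simp [insertPerm]

@[simp] lemma insertPerm_apply_succAbove (i : Fin m) :
    insertPerm P V τ (P.succAbove i) = V.succAbove (τ i) := by
  simp [insertPerm]

lemma sum_filter_apply_eq_sum_insertPerm {M : Type*} [AddCommMonoid M]
    (f : Perm (Fin (m + 1)) → M) :
    ∑ σ ∈ univ.filter (fun σ : Perm (Fin (m + 1)) => σ P = V), f σ
      = ∑ τ, f (insertPerm P V τ) := by
  set e := equivCongr (finSuccEquiv' P) (finSuccEquiv' V)
  symm
  refine Finset.sum_nbij' (insertPerm P V) (fun σ => removeNone (e σ)) (by simp) (by simp)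
    (fun τ _ => ?_) (fun σ hσ => ?_) (by simp)
  · simp only [insertPerm, e, apply_symm_apply, removeNone_optionCongr]
  · have hnone : e σ none = none := by simpa [e] using (Finset.mem_filter.mp hσ).2.symm
    rw [insertPerm, map_equiv_removeNone, hnone, swap_self]
    exact e.symm_apply_apply σ

end insertPerm

lemma Fin.val_succAbove {n : ℕ} (p : Fin (n + 1)) (i : Fin n) :
    (p.succAbove i : ℕ) = if (i : ℕ) < p then (i : ℕ) else (i : ℕ) + 1 := by
  by_cases h : (i : ℕ) < p
  · rw [Fin.succAbove_of_castSucc_lt _ _ (by simpa [Fin.lt_def] using h), if_pos h]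
    rfl
  · rw [Fin.succAbove_of_le_castSucc _ _ (by simp [Fin.le_def]; omega), if_neg h]
    rfl

section crossings

variable {n : ℕ}

lemma isCross_iff_val (σ : Perm (Fin n)) (p q : Fin n) :
    IsCross σ p q ↔ ((p : ℕ) < q ∧ (q : ℕ) < σ p ∧ (σ p : ℕ) < σ q) ∨
      ((σ p : ℕ) < σ q ∧ (σ q : ℕ) ≤ p ∧ (p : ℕ) < q) := by
  rw [IsCross, Fin.lt_def, Fin.lt_def]

lemma IsCross.lt {σ : Perm (Fin n)} {p q : Fin n} (h : IsCross σ p q) : p < q :=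
  h.elim (·.1) (·.2.2)

lemma not_isCross_of_apply_eq_zero {σ : Perm (Fin (n + 1))} {p q : Fin (n + 1)}
    (h : σ q = 0) : ¬ IsCross σ p q := by
  rintro (⟨-, -, hpq⟩ | ⟨hpq, -⟩) <;> exact Fin.not_lt_zero _ (h ▸ hpq)

lemma card_filter_isCross_comp (σ e : Perm (Fin n)) :
    #{x : Fin n × Fin n | IsCross σ (e x.1) (e x.2)} = cr σ :=
  Finset.card_equiv (e.prodCongr e) (by simp)

lemma cr_eq_card_succAbove (σ : Perm (Fin (n + 1))) (P : Fin (n + 1)) :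
    cr σ = #{x : Fin n × Fin n | IsCross σ (P.succAbove x.1) (P.succAbove x.2)} +
      #{j | IsCross σ P (P.succAbove j)} + #{i | IsCross σ (P.succAbove i) P} := by
  have hPP : ¬ IsCross σ P P := fun h => lt_irrefl _ h.lt
  simp only [cr, Finset.card_filter, Fintype.sum_prod_type]
  rw [Fin.sum_univ_succAbove _ P]
  simp only [Fin.sum_univ_succAbove _ P, hPP, if_false, Finset.sum_add_distrib]
  ring

end crossings

section insertCross

variable {m : ℕ}

lemma cr_insertPerm_last_last (τ : Perm (Fin m)) :
    cr (insertPerm (Fin.last m) (Fin.last m) τ) = cr τ := by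
  set σ := insertPerm (Fin.last m) (Fin.last m) τ
  have hσ : ∀ i, σ i.castSucc = (τ i).castSucc := by simp [σ, ← Fin.succAbove_last]
  have hleft : ∀ j : Fin m, ¬ IsCross σ (Fin.last m) j.castSucc :=
    fun j h => (Fin.le_last _).not_gt h.lt
  have hright : ∀ i : Fin m, ¬ IsCross σ i.castSucc (Fin.last m) := by
    intro i h
    have hlast : σ (Fin.last m) = Fin.last m := insertPerm_apply_self _ _ _
    rw [isCross_iff_val, hσ, hlast] at h
    simp only [Fin.val_castSucc, Fin.val_last] at h
    omega
  rw [cr_eq_card_succAbove σ (Fin.last m)]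
  simp only [Fin.succAbove_last, hleft, hright, Finset.filter_false, Finset.card_empty,
    add_zero]
  simp [cr, IsCross, hσ]

lemma isCross_insertPerm_zero_succAbove_iff {P : Fin (m + 1)} (hP : m ≤ (P : ℕ) + 1)
    (τ : Perm (Fin m)) (i j : Fin m) :
    IsCross (insertPerm P 0 τ) (P.succAbove i) (P.succAbove j) ↔
      IsCross τ⁻¹ (τ i) (τ j) := by
  have hij : P.succAbove i < P.succAbove j ↔ i < j := Fin.succAbove_lt_succAbove_iff
  rw [Fin.lt_def, Fin.lt_def] at hij
  have hi := (τ i).isLt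
  have hj := (τ j).isLt
  rw [isCross_iff_val, isCross_iff_val]
  simp only [insertPerm_apply_succAbove, Fin.succAbove_zero, Fin.val_succ,
    Perm.inv_def, symm_apply_apply]
  rw [Fin.val_succAbove P i, Fin.val_succAbove P j] at *
  split_ifs at * <;> omega

lemma cr_insertPerm_zero {P : Fin (m + 1)} (hP : m ≤ (P : ℕ) + 1) (τ : Perm (Fin m)) :
    cr (insertPerm P 0 τ) = cr τ⁻¹ + #{j | IsCross (insertPerm P 0 τ) P (P.succAbove j)} := by
  rw [cr_eq_card_succAbove _ P]
  simp only [isCross_insertPerm_zero_succAbove_iff hP, card_filter_isCross_comp,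
    not_isCross_of_apply_eq_zero (insertPerm_apply_self P 0 τ), Finset.filter_false,
    Finset.card_empty, add_zero]

lemma cr_insertPerm_last_zero (τ : Perm (Fin m)) :
    cr (insertPerm (Fin.last m) 0 τ) = cr τ⁻¹ := by
  rw [cr_insertPerm_zero (by simp), Finset.card_eq_zero.mpr, add_zero]
  exact Finset.filter_false_of_mem fun j _ h => (Fin.le_last _).not_gt h.lt

lemma cr_insertPerm_castSucc_last_zero (τ : Perm (Fin (m + 1))) :
    cr (insertPerm (Fin.last m).castSucc 0 τ)
      = cr τ⁻¹ + if τ (Fin.last m) = Fin.last m then 0 else 1 := by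
  set K := (Fin.last m).castSucc
  rw [cr_insertPerm_zero (by simp [K]), Finset.card_filter,
    Fintype.sum_eq_single (Fin.last m)]
  · have hL := insertPerm_apply_succAbove K 0 τ (Fin.last m)
    rw [Fin.succAbove_castSucc_self, Fin.succAbove_zero] at hL
    have hfix : τ (Fin.last m) = Fin.last m ↔ (τ (Fin.last m) : ℕ) = m := by
      simp [Fin.ext_iff]
    have hbound := (τ (Fin.last m)).isLt
    simp only [isCross_iff_val, hL, insertPerm_apply_self, K, Fin.succAbove_castSucc_self,
      Fin.val_succ, Fin.val_castSucc, Fin.val_last, Fin.val_zero, hfix]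
    split_ifs <;> omega
  · refine fun j hj => if_neg fun h => (Fin.le_last j).not_gt ?_
    have hlt := h.lt
    rwa [Fin.succAbove_castSucc_of_lt _ _ (Fin.lt_last_iff_ne_last.mpr hj),
      Fin.castSucc_lt_castSucc_iff] at hlt

end insertCross

lemma Fintype.sum_perm_inv {α M : Type*} [Fintype α] [DecidableEq α] [AddCommMonoid M]
    (g : Perm α → M) : ∑ τ, g τ⁻¹ = ∑ τ, g τ :=
  Fintype.sum_equiv (Equiv.inv _) _ _ fun _ => rfl

section generatingFunctions

variable {M : Type*} [AddCommMonoid M] (f : ℕ → M) (m : ℕ)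

lemma sum_filter_apply_last_eq_last :
    ∑ σ ∈ univ.filter (fun σ : Perm (Fin (m + 1)) => σ (Fin.last m) = Fin.last m), f (cr σ)
      = ∑ τ : Perm (Fin m), f (cr τ) := by
  simp only [sum_filter_apply_eq_sum_insertPerm, cr_insertPerm_last_last]

lemma sum_filter_apply_last_eq_zero :
    ∑ σ ∈ univ.filter (fun σ : Perm (Fin (m + 1)) => σ (Fin.last m) = 0), f (cr σ)
      = ∑ τ : Perm (Fin m), f (cr τ) := by
  simp only [sum_filter_apply_eq_sum_insertPerm, cr_insertPerm_last_zero]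
  exact Fintype.sum_perm_inv (fun τ => f (cr τ))

lemma sum_filter_apply_castSucc_last_eq_zero {R : Type*} [CommRing R] (q : R) :
    ∑ σ ∈ univ.filter (fun σ : Perm (Fin (m + 2)) => σ (Fin.last m).castSucc = 0), q ^ cr σ
      = q * ∑ τ : Perm (Fin (m + 1)), q ^ cr τ +
          (1 - q) * ∑ τ : Perm (Fin m), q ^ cr τ := by
  have weight (τ : Perm (Fin (m + 1))) :
      q ^ (cr τ⁻¹ + if τ (Fin.last m) = Fin.last m then 0 else 1)
        = q * q ^ cr τ⁻¹ +
          (1 - q) * if τ⁻¹ (Fin.last m) = Fin.last m then q ^ cr τ⁻¹ else 0 := by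
    have hfix : τ⁻¹ (Fin.last m) = Fin.last m ↔ τ (Fin.last m) = Fin.last m := by
      rw [Perm.inv_eq_iff_eq, eq_comm]
    simp only [hfix]
    split_ifs <;> ring
  simp only [sum_filter_apply_eq_sum_insertPerm, cr_insertPerm_castSucc_last_zero, weight,
    sum_add_distrib, ← mul_sum]
  rw [Fintype.sum_perm_inv (fun τ => q ^ cr τ),
    Fintype.sum_perm_inv (fun τ => if τ (Fin.last m) = Fin.last m then q ^ cr τ else 0),
    ← sum_filter, sum_filter_apply_last_eq_last]

end generatingFunctions

theorem stmt10 (n : ℕ) (hn : 1 ≤ n) (F : ℕ → Polynomial ℤ)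
    (hF : ∀ m, F m = ∑ σ : Equiv.Perm (Fin m), (Polynomial.X : Polynomial ℤ) ^ cr σ) :
    (∑ σ ∈ Finset.univ.filter (fun σ : Equiv.Perm (Fin (n + 1)) => σ (Fin.last n) = 0),
        (Polynomial.X : Polynomial ℤ) ^ cr σ) = F n ∧
    (∑ σ ∈ Finset.univ.filter
          (fun σ : Equiv.Perm (Fin (n + 1)) => (σ ⟨n - 1, by omega⟩ : ℕ) = 0),
        (Polynomial.X : Polynomial ℤ) ^ cr σ)
      = Polynomial.X * F n + (1 - Polynomial.X) * F (n - 1) := by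
  refine ⟨by rw [hF]; exact sum_filter_apply_last_eq_zero (X ^ ·) n, ?_⟩
  obtain ⟨m, rfl⟩ : ∃ m, n = m + 1 := ⟨n - 1, by omega⟩
  simp only [Fin.val_eq_zero_iff, hF, add_tsub_cancel_right]
  exact sum_filter_apply_castSucc_last_eq_zero m X
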